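/- arXiv:1612.00804 — 2 statements merged into one kernel-verified Lean document; each statement's English description precedes it below -/
import Mathlib

section
/- (Optimal set values at smaller sparsities.) Let l : ℝ^p → ℝ be differentiable with associated set function f(S) = l(β^{(S)}) − l(0). Suppose l is m-strongly concave on Ω_k and M′-smooth on Ω̃_k, with M′/m < k′ < k. For each j, let OPT(j) = max{f(T) : |T| ≤ j} denote the optimal value at sparsity level j. Then OPT(k′) ≥ OPT(k) · Π_{j=k′+1}^{k} (1 − M′/(j·m)). -/
/-!
At a restricted maximizer `β S` the gradient vanishes on vectors supported in `S`. Strong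
concavity between `β T` and `0` then gives `f T ≥ (m/2)‖β T‖²`, while smoothness between `β T`
and `β T` with coordinate `i` zeroed gives `f T - f (T \ {i}) ≤ (M'/2) (β T i)²`. Summing over
`i ∈ T`, the total loss of the single deletions is at most `(M'/m) f T`, so for `|T| = j` the
cheapest deletion keeps `(1 - M'/(j m)) f T`; hence `(1 - M'/(j m)) OPT(j) ≤ OPT(j-1)`, and these
factors are nonnegative for `j > k'`, so the inequalities telescope from `k` down to `k'`.
-/

open Finset

noncomputable section

/-- Number of nonzero coordinates (the "ℓ₀ norm") of a vector. -/
def spar {p : ℕ} (v : Fin p → ℝ) : ℕ := (Finset.univ.filter fun i => v i ≠ 0).card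

/-- Support of a vector, as a `Finset`. -/
def suppF {p : ℕ} (v : Fin p → ℝ) : Finset (Fin p) :=
  Finset.univ.filter fun i => v i ≠ 0

/-- `Ω_k`: pairs of `k`-sparse vectors differing in at most `k` coordinates. -/
def Omega {p : ℕ} (k : ℕ) : Set ((Fin p → ℝ) × (Fin p → ℝ)) :=
  {q | spar q.1 ≤ k ∧ spar q.2 ≤ k ∧ spar (q.1 - q.2) ≤ k}

/-- `Ω̃_k`: pairs of `k`-sparse vectors differing in at most one coordinate. -/
def OmegaT {p : ℕ} (k : ℕ) : Set ((Fin p → ℝ) × (Fin p → ℝ)) :=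
  {q | spar q.1 ≤ k ∧ spar q.2 ≤ k ∧ spar (q.1 - q.2) ≤ 1}

/-- `l` is `m`-strongly concave on `Ω`. -/
def RStrongConcaveOn {p : ℕ} (l : (Fin p → ℝ) → ℝ) (m : ℝ)
    (Ω : Set ((Fin p → ℝ) × (Fin p → ℝ))) : Prop :=
  ∀ x y : Fin p → ℝ, (x, y) ∈ Ω →
    l y - l x - fderiv ℝ l x (y - x) ≤ -(m / 2) * ∑ i, (y i - x i) ^ 2

/-- `l` is `M`-smooth on `Ω`. -/
def RSmoothOn {p : ℕ} (l : (Fin p → ℝ) → ℝ) (M : ℝ)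
    (Ω : Set ((Fin p → ℝ) × (Fin p → ℝ))) : Prop :=
  ∀ x y : Fin p → ℝ, (x, y) ∈ Ω →
    -(M / 2) * ∑ i, (y i - x i) ^ 2 ≤ l y - l x - fderiv ℝ l x (y - x)


lemma suppF_subset_iff {p : ℕ} {v : Fin p → ℝ} {S : Finset (Fin p)} :
    suppF v ⊆ S ↔ ∀ i ∉ S, v i = 0 := by
  simp only [suppF, subset_iff, mem_filter, mem_univ, true_and]
  exact ⟨fun h i hi => by_contra fun hv => hi (h hv), fun h i hv => by_contra fun hi => hv (h i hi)⟩

lemma spar_le_card_of_suppF_subset {p : ℕ} {v : Fin p → ℝ} {S : Finset (Fin p)}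
    (h : suppF v ⊆ S) : spar v ≤ S.card :=
  card_le_card h

lemma fderiv_apply_eq_zero_of_forall_add_smul_le {E : Type*} [NormedAddCommGroup E]
    [NormedSpace ℝ E] {l : E → ℝ} {x v : E} (hl : DifferentiableAt ℝ l x)
    (hmax : ∀ t : ℝ, l (x + t • v) ≤ l x) : fderiv ℝ l x v = 0 := by
  have hline : HasDerivAt (fun t : ℝ => x + t • v) v 0 := by
    simpa using ((hasDerivAt_id (0 : ℝ)).smul_const v).const_add x
  have hcomp : HasDerivAt (fun t : ℝ => l (x + t • v)) (fderiv ℝ l x v) 0 :=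
    hl.hasFDerivAt.comp_hasDerivAt_of_eq (0 : ℝ) hline (by simp)
  refine IsLocalMax.hasDerivAt_eq_zero (Filter.Eventually.of_forall fun t => ?_) hcomp
  simpa using hmax t

section Maximizers

variable {p : ℕ} {l : (Fin p → ℝ) → ℝ} {β : Finset (Fin p) → Fin p → ℝ}

lemma fderiv_maximizer_apply_eq_zero (hl : Differentiable ℝ l)
    (hβsupp : ∀ S, suppF (β S) ⊆ S) (hβmax : ∀ S v, suppF v ⊆ S → l v ≤ l (β S))
    {S : Finset (Fin p)} {v : Fin p → ℝ} (hv : suppF v ⊆ S) : fderiv ℝ l (β S) v = 0 := by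
  refine fderiv_apply_eq_zero_of_forall_add_smul_le (hl _) fun t => hβmax S _ ?_
  rw [suppF_subset_iff] at hv ⊢
  intro i hi
  simp [suppF_subset_iff.1 (hβsupp S) i hi, hv i hi]

lemma half_mul_sum_sq_le_sub_zero (hl : Differentiable ℝ l)
    (hβsupp : ∀ S, suppF (β S) ⊆ S) (hβmax : ∀ S v, suppF v ⊆ S → l v ≤ l (β S))
    {k : ℕ} {m : ℝ} (hconc : RStrongConcaveOn l m (Omega k))
    {S : Finset (Fin p)} (hS : S.card ≤ k) :
    m / 2 * ∑ i, β S i ^ 2 ≤ l (β S) - l 0 := by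
  have hspar : spar (β S) ≤ k := (spar_le_card_of_suppF_subset (hβsupp S)).trans hS
  have hmem : (β S, (0 : Fin p → ℝ)) ∈ Omega k := ⟨hspar, by simp [spar], by simpa using hspar⟩
  have hderiv : fderiv ℝ l (β S) (-β S) = 0 := by
    rw [map_neg, fderiv_maximizer_apply_eq_zero hl hβsupp hβmax (hβsupp S), neg_zero]
  have h := hconc _ _ hmem
  simp only [Pi.zero_apply, zero_sub, even_two, Even.neg_pow, hderiv] at h
  linarith

lemma sub_erase_le_half_mul_sq (hl : Differentiable ℝ l)
    (hβsupp : ∀ S, suppF (β S) ⊆ S) (hβmax : ∀ S v, suppF v ⊆ S → l v ≤ l (β S))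
    {k : ℕ} {M : ℝ} (hsmooth : RSmoothOn l M (OmegaT k))
    {S : Finset (Fin p)} (hS : S.card ≤ k) {i : Fin p} (hi : i ∈ S) :
    l (β S) - l (β (S.erase i)) ≤ M / 2 * β S i ^ 2 := by
  set x := β S
  set y := Function.update x i 0
  have hx : ∀ j ∉ S, x j = 0 := suppF_subset_iff.1 (hβsupp S)
  have hy : suppF y ⊆ S.erase i := by
    refine suppF_subset_iff.2 fun j hj => ?_
    by_cases hji : j = i
    · simp [y, hji]
    · simp [y, hji, hx j (by simpa [hji] using hj)]
  have hxy : suppF (x - y) ⊆ {i} :=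
    suppF_subset_iff.2 fun j hj => by simp [y, Finset.mem_singleton.not.1 hj]
  have hmem : (x, y) ∈ OmegaT k :=
    ⟨(spar_le_card_of_suppF_subset (hβsupp S)).trans hS,
      (spar_le_card_of_suppF_subset hy).trans (card_erase_le.trans hS),
      spar_le_card_of_suppF_subset hxy⟩
  have hderiv : fderiv ℝ l x (y - x) = 0 := by
    refine fderiv_maximizer_apply_eq_zero hl hβsupp hβmax (suppF_subset_iff.2 fun j hj => ?_)
    simp [y, ne_of_mem_of_not_mem hi hj |>.symm]
  have hsum : ∑ j, (y j - x j) ^ 2 = x i ^ 2 := by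
    rw [sum_eq_single i (fun j _ hji => by simp [y, hji]) (by simp)]
    simp [y]
  have h := hsmooth x y hmem
  rw [hderiv, hsum] at h
  linarith [hβmax _ y hy]

lemma sum_sub_erase_le (hl : Differentiable ℝ l)
    (hβsupp : ∀ S, suppF (β S) ⊆ S) (hβmax : ∀ S v, suppF v ⊆ S → l v ≤ l (β S))
    {k : ℕ} {m M : ℝ} (hm : 0 < m) (hM : 0 ≤ M)
    (hconc : RStrongConcaveOn l m (Omega k)) (hsmooth : RSmoothOn l M (OmegaT k))
    {T : Finset (Fin p)} (hT : T.card ≤ k) :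
    ∑ i ∈ T, (l (β T) - l (β (T.erase i))) ≤ M / m * (l (β T) - l 0) :=
  calc ∑ i ∈ T, (l (β T) - l (β (T.erase i)))
      ≤ ∑ i ∈ T, M / 2 * β T i ^ 2 :=
        sum_le_sum fun i hi => sub_erase_le_half_mul_sq hl hβsupp hβmax hsmooth hT hi
    _ ≤ ∑ i, M / 2 * β T i ^ 2 :=
        sum_le_sum_of_subset_of_nonneg (subset_univ T) fun _ _ _ => by positivity
    _ = M / m * (m / 2 * ∑ i, β T i ^ 2) := by rw [← mul_sum]; field_simp
    _ ≤ M / m * (l (β T) - l 0) := by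
        gcongr
        exact half_mul_sum_sq_le_sub_zero hl hβsupp hβmax hconc hT

end Maximizers

section SetFunctions

variable {α : Type*} [DecidableEq α] {f : Finset α → ℝ}

lemma exists_mem_mul_le_erase {T : Finset α} (hT : T.Nonempty) {c : ℝ}
    (hsum : ∑ i ∈ T, (f T - f (T.erase i)) ≤ c * f T) :
    ∃ i ∈ T, (1 - c / T.card) * f T ≤ f (T.erase i) := by
  have hcard : (0 : ℝ) < T.card := by exact_mod_cast hT.card_pos
  obtain ⟨i, hi, hle⟩ := exists_le_of_sum_le hT (f := fun i => f T - f (T.erase i))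
    (g := fun _ => c * f T / T.card) <| by
    rw [sum_const, nsmul_eq_mul, mul_div_cancel₀ _ hcard.ne']
    exact hsum
  refine ⟨i, hi, ?_⟩
  have : (1 - c / T.card) * f T = f T - c * f T / T.card := by field_simp
  linarith

lemma mul_opt_succ_le {OPT : ℕ → ℝ} (hub : ∀ j T, T.card ≤ j → f T ≤ OPT j)
    (hach : ∀ j, ∃ T, T.card ≤ j ∧ f T = OPT j) (hf₀ : 0 ≤ f ∅) {j : ℕ} {a : ℝ} (ha : a ≤ 1)
    (herase : ∀ T : Finset α, T.card = j + 1 → ∃ i ∈ T, a * f T ≤ f (T.erase i)) :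
    a * OPT (j + 1) ≤ OPT j := by
  obtain ⟨T, hTcard, hT⟩ := hach (j + 1)
  rcases hTcard.lt_or_eq with hlt | heq
  · have hOPT₀ : 0 ≤ OPT (j + 1) := hf₀.trans (hub _ ∅ (by simp))
    have : OPT (j + 1) ≤ OPT j := hT ▸ hub j T (by omega)
    nlinarith
  · obtain ⟨i, hi, hle⟩ := herase T heq
    rw [← hT]
    exact hle.trans (hub j _ (by simp [card_erase_of_mem hi, heq]))

end SetFunctions

lemma mul_prod_Icc_le_of_mul_le {u a : ℕ → ℝ} {k' k : ℕ} (hk : k' ≤ k)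
    (ha : ∀ j ∈ Icc (k' + 1) k, 0 ≤ a j)
    (hstep : ∀ j, k' ≤ j → j < k → a (j + 1) * u (j + 1) ≤ u j) :
    u k * ∏ j ∈ Icc (k' + 1) k, a j ≤ u k' := by
  induction k, hk using Nat.le_induction with
  | base => simp
  | succ n hn ih =>
    have hprod : 0 ≤ ∏ j ∈ Icc (k' + 1) n, a j :=
      prod_nonneg fun j hj => ha j (Icc_subset_Icc_right n.le_succ hj)
    calc u (n + 1) * ∏ j ∈ Icc (k' + 1) (n + 1), a j
        = a (n + 1) * u (n + 1) * ∏ j ∈ Icc (k' + 1) n, a j := by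
          rw [prod_Icc_succ_top (by omega)]; ring
      _ ≤ u n * ∏ j ∈ Icc (k' + 1) n, a j := by gcongr; exact hstep n hn (by omega)
      _ ≤ u k' := ih (fun j hj => ha j (Icc_subset_Icc_right n.le_succ hj))
          fun j hj hjn => hstep j hj (by omega)

/-- optimal set values at smaller sparsities. -/
theorem opt_values_smaller_sparsity
    (p : ℕ) (l : (Fin p → ℝ) → ℝ) (hl : Differentiable ℝ l)
    (β : Finset (Fin p) → (Fin p → ℝ))
    (hβsupp : ∀ S : Finset (Fin p), suppF (β S) ⊆ S)
    (hβmax : ∀ S : Finset (Fin p), ∀ v : Fin p → ℝ, suppF v ⊆ S → l v ≤ l (β S))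
    (f : Finset (Fin p) → ℝ) (hf : ∀ S, f S = l (β S) - l 0)
    (k k' : ℕ)
    (m M' : ℝ) (hm : 0 < m) (hM' : 0 < M')
    (hconc : RStrongConcaveOn l m (Omega k))
    (hsmooth : RSmoothOn l M' (OmegaT k))
    (hlow : M' / m < (k' : ℝ)) (hkk : k' < k)
    (OPT : ℕ → ℝ)
    (hOPTub : ∀ j : ℕ, ∀ T : Finset (Fin p), T.card ≤ j → f T ≤ OPT j)
    (hOPTach : ∀ j : ℕ, ∃ T : Finset (Fin p), T.card ≤ j ∧ f T = OPT j) :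
    OPT k * ∏ j ∈ Finset.Icc (k' + 1) k, (1 - M' / ((j : ℝ) * m)) ≤ OPT k' := by
  have hf₀ : 0 ≤ f ∅ := by
    rw [hf]
    linarith [hβmax ∅ 0 (by simp [suppF])]
  have herase : ∀ j < k, ∀ T : Finset (Fin p), T.card = j + 1 →
      ∃ i ∈ T, (1 - M' / (((j + 1 : ℕ) : ℝ) * m)) * f T ≤ f (T.erase i) := by
    intro j hj T hT
    have hsum := sum_sub_erase_le hl hβsupp hβmax hm hM'.le hconc hsmooth (T := T) (by omega)
    replace hsum : ∑ i ∈ T, (f T - f (T.erase i)) ≤ M' / m * f T := by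
      simpa only [hf, sub_sub_sub_cancel_right] using hsum
    obtain ⟨i, hi, h⟩ := exists_mem_mul_le_erase (card_pos.1 (by omega)) hsum
    rw [hT, div_div, mul_comm m] at h
    exact ⟨i, hi, h⟩
  refine mul_prod_Icc_le_of_mul_le hkk.le (fun j hj => ?_)
    fun j _ hj => mul_opt_succ_le hOPTub hOPTach hf₀ ?_ (herase j hj)
  · have hj : (k' : ℝ) + 1 ≤ j := by exact_mod_cast (mem_Icc.1 hj).1
    have : (0 : ℝ) < j := by linarith [k'.cast_nonneg (α := ℝ)]
    rw [sub_nonneg, div_le_one (mul_pos this hm), ← div_le_iff₀ hm]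
    linarith
  · linarith [show 0 ≤ M' / (((j + 1 : ℕ) : ℝ) * m) by positivity]
end
end

section
/- (Parameter recovery.) Let l : ℝ^p → ℝ be differentiable with associated set function f(S) = l(β^{(S)}) − l(0), and suppose l is m-strongly concave on Ω_{s+r} with m > 0. Let S_r be a set of size at most r, β̂^r = β^{(S_r)}, and let β^s be any vector supported on a set S*_s of size at most s with l(β^s) ≥ l(0). Suppose f(S_r) ≥ C · f(S*_s) for some C ∈ [0,1]. Then ‖β̂^r − β^s‖₂² ≤ (4/m²) · ‖∇l(β^s)‖_{2,(s+r)}² + (4/m) · (1 − C) · (l(β^s) − l(0)), where ‖v‖_{2,k}² := max over subsets T of size k of Σ_{j∈T} v_j² (sum of the k largest squared coordinates). -/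
/-
Put `Δ = β̂ʳ - βˢ` and `T = S_r ∪ S*_s`; the pair `(βˢ, β̂ʳ)` lies in `Ω_{s+r}` and `Δ` is supported
in `T`, with `|T| ≤ s + r`. Strong concavity at `βˢ` gives
`(m/2)‖Δ‖² ≤ l(βˢ) - l(β̂ʳ) + ⟨∇l(βˢ), Δ⟩`, and Young's inequality on `T` bounds
`m ⟨∇l(βˢ), Δ⟩ ≤ ∑_{j ∈ T} (∇l(βˢ))_j² + (m²/4)‖Δ‖²`. Finally, since `βˢ` is supported in `S*_s`,
`l(βˢ) - l(0) ≤ f(S*_s)`, so the hypothesis `f(S_r) ≥ C f(S*_s)` gives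
`l(βˢ) - l(β̂ʳ) ≤ (1 - C)(l(βˢ) - l(0))`.
-/

open Finset

noncomputable section

section Support

variable {p : ℕ}

theorem mem_suppF {v : Fin p → ℝ} {i : Fin p} : i ∈ suppF v ↔ v i ≠ 0 := by
  simp [suppF]

theorem spar_eq_card_suppF (v : Fin p → ℝ) : spar v = (suppF v).card := rfl

theorem eq_zero_of_suppF_subset {v : Fin p → ℝ} {S : Finset (Fin p)} (hv : suppF v ⊆ S)
    {i : Fin p} (hi : i ∉ S) : v i = 0 :=
  not_not.mp fun h => hi (hv (mem_suppF.mpr h))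

theorem suppF_sub_subset_union (x y : Fin p → ℝ) : suppF (x - y) ⊆ suppF x ∪ suppF y := by
  intro i hi
  by_contra h
  simp only [mem_union, mem_suppF, not_or, not_not] at h
  simp [mem_suppF, h.1, h.2] at hi

theorem mem_Omega_of_suppF_subset {x y : Fin p → ℝ} {A B : Finset (Fin p)} {k : ℕ}
    (hx : suppF x ⊆ A) (hy : suppF y ⊆ B) (hk : (A ∪ B).card ≤ k) : (x, y) ∈ Omega k := by
  have hsub : A ⊆ A ∪ B ∧ B ⊆ A ∪ B := ⟨subset_union_left, subset_union_right⟩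
  refine ⟨?_, ?_, ?_⟩ <;> simp only [spar_eq_card_suppF]
  · exact (card_le_card (hx.trans hsub.1)).trans hk
  · exact (card_le_card (hy.trans hsub.2)).trans hk
  · exact (card_le_card ((suppF_sub_subset_union x y).trans (union_subset_union hx hy))).trans hk

end Support

theorem ContinuousLinearMap.apply_eq_sum_mul_single {ι : Type*} [Fintype ι] [DecidableEq ι]
    (L : (ι → ℝ) →L[ℝ] ℝ) (v : ι → ℝ) : L v = ∑ i, v i * L (Pi.single i 1) := by
  conv_lhs => rw [pi_eq_sum_univ' v]
  simp [map_sum, smul_eq_mul]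

theorem mul_sum_mul_le_sum_sq_add {ι : Type*} (T : Finset ι) (m : ℝ) (a b : ι → ℝ) :
    m * ∑ i ∈ T, a i * b i ≤ ∑ i ∈ T, b i ^ 2 + m ^ 2 / 4 * ∑ i ∈ T, a i ^ 2 := by
  rw [mul_sum, mul_sum, ← sum_add_distrib]
  exact sum_le_sum fun i _ => by nlinarith [sq_nonneg (b i - m / 2 * a i)]

theorem sum_sq_sub_le_of_strongConcave {p : ℕ} {l : (Fin p → ℝ) → ℝ} {m : ℝ} (hm : 0 < m)
    {x y : Fin p → ℝ} {T : Finset (Fin p)}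
    (hconc : l y - l x - fderiv ℝ l x (y - x) ≤ -(m / 2) * ∑ i, (y i - x i) ^ 2)
    (hT : ∀ i ∉ T, y i = x i) :
    ∑ i, (y i - x i) ^ 2 ≤
      4 / m ^ 2 * ∑ j ∈ T, (fderiv ℝ l x (Pi.single j 1)) ^ 2 + 4 / m * (l x - l y) := by
  set D := ∑ i, (y i - x i) ^ 2
  set G := ∑ j ∈ T, (fderiv ℝ l x (Pi.single j 1)) ^ 2
  have hvanish : ∀ i ∉ T, (y - x) i = 0 := fun i hi => by simp [hT i hi]
  have hgrad : fderiv ℝ l x (y - x) = ∑ i ∈ T, (y i - x i) * fderiv ℝ l x (Pi.single i 1) := by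
    rw [ContinuousLinearMap.apply_eq_sum_mul_single, ← sum_subset (subset_univ T)]
    · rfl
    · intro i _ hi
      simp [hvanish i hi]
  have hD : ∑ i ∈ T, (y i - x i) ^ 2 ≤ D := sum_le_univ_sum_of_nonneg fun i => sq_nonneg _
  have hyoung := mul_sum_mul_le_sum_sq_add T m (fun i => y i - x i)
    (fun i => fderiv ℝ l x (Pi.single i 1))
  have hkey : m ^ 2 / 4 * D ≤ G + m * (l x - l y) := by
    rw [hgrad] at hconc
    nlinarith
  rw [div_mul_eq_mul_div, div_mul_eq_mul_div, div_add_div _ _ (by positivity) hm.ne',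
    le_div_iff₀ (by positivity)]
  nlinarith

theorem sub_le_one_sub_mul_sub_of_mul_le {a b c d C : ℝ} (hC : 0 ≤ C) (hab : a ≤ b)
    (happrox : C * (b - c) ≤ d - c) : a - d ≤ (1 - C) * (a - c) := by
  nlinarith

theorem sum_le_iSup_card_le {ι : Type*} [Fintype ι] {k : ℕ} (g : ι → ℝ) {T : Finset ι}
    (hT : T.card ≤ k) :
    ∑ j ∈ T, g j ≤ ⨆ T : {T : Finset ι // T.card ≤ k}, ∑ j ∈ (T : Finset ι), g j :=
  le_ciSup (f := fun T : {T : Finset ι // T.card ≤ k} => ∑ j ∈ (T : Finset ι), g j)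
    (Set.finite_range _).bddAbove ⟨T, hT⟩

theorem parameter_recovery_general
    (p : ℕ) (l : (Fin p → ℝ) → ℝ)
    (β : Finset (Fin p) → (Fin p → ℝ))
    (hβsupp : ∀ S : Finset (Fin p), suppF (β S) ⊆ S)
    (hβmax : ∀ S : Finset (Fin p), ∀ v : Fin p → ℝ, suppF v ⊆ S → l v ≤ l (β S))
    (f : Finset (Fin p) → ℝ) (hf : ∀ S, f S = l (β S) - l 0)
    (s r : ℕ)
    (m : ℝ) (hm : 0 < m)
    (hconc : RStrongConcaveOn l m (Omega (s + r)))
    (Sr : Finset (Fin p)) (hSr : Sr.card ≤ r)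
    (Sstars : Finset (Fin p)) (hSstars : Sstars.card ≤ s)
    (βs : Fin p → ℝ) (hβssupp : suppF βs ⊆ Sstars)
    (C : ℝ) (hC0 : 0 ≤ C)
    (happrox : C * f Sstars ≤ f Sr) :
    ∑ i, (β Sr i - βs i) ^ 2 ≤
      4 / m ^ 2 *
          (⨆ T : {T : Finset (Fin p) // T.card ≤ s + r},
            ∑ j ∈ (T : Finset (Fin p)), (fderiv ℝ l βs (Pi.single j 1)) ^ 2) +
        4 / m * (1 - C) * (l βs - l 0) := by
  set T := Sstars ∪ Sr
  have hT : T.card ≤ s + r := (card_union_le _ _).trans (add_le_add hSstars hSr)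
  have hvanish : ∀ i ∉ T, β Sr i = βs i := fun i hi => by
    simp only [T, mem_union, not_or] at hi
    rw [eq_zero_of_suppF_subset (hβsupp Sr) hi.2, eq_zero_of_suppF_subset hβssupp hi.1]
  have hrecover := sum_sq_sub_le_of_strongConcave hm
    (hconc βs (β Sr) (mem_Omega_of_suppF_subset hβssupp (hβsupp Sr) hT)) hvanish
  have hgap : l βs - l (β Sr) ≤ (1 - C) * (l βs - l 0) :=
    sub_le_one_sub_mul_sub_of_mul_le hC0 (hβmax Sstars βs hβssupp)
      (by simpa only [hf] using happrox)
  calc _ ≤ _ := hrecover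
    _ ≤ _ := by
      rw [mul_assoc (4 / m)]
      gcongr
      exact sum_le_iSup_card_le _ hT

/-- parameter recovery. The quantity
`⨆ T : {T // T.card ≤ s + r}, ∑ j in T, (∇l(βs) j)²` is `‖∇l(βs)‖₂,(s+r)²`,
the sum of the `s + r` largest squared coordinates of the gradient. -/
theorem parameter_recovery
    (p : ℕ) (l : (Fin p → ℝ) → ℝ) (hl : Differentiable ℝ l)
    (β : Finset (Fin p) → (Fin p → ℝ))
    (hβsupp : ∀ S : Finset (Fin p), suppF (β S) ⊆ S)
    (hβmax : ∀ S : Finset (Fin p), ∀ v : Fin p → ℝ, suppF v ⊆ S → l v ≤ l (β S))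
    (f : Finset (Fin p) → ℝ) (hf : ∀ S, f S = l (β S) - l 0)
    (s r : ℕ)
    (m : ℝ) (hm : 0 < m)
    (hconc : RStrongConcaveOn l m (Omega (s + r)))
    (Sr : Finset (Fin p)) (hSr : Sr.card ≤ r)
    (Sstars : Finset (Fin p)) (hSstars : Sstars.card ≤ s)
    (βs : Fin p → ℝ) (hβssupp : suppF βs ⊆ Sstars) (hβsval : l 0 ≤ l βs)
    (C : ℝ) (hC0 : 0 ≤ C) (hC1 : C ≤ 1)
    (happrox : C * f Sstars ≤ f Sr) :
    ∑ i, (β Sr i - βs i) ^ 2 ≤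
      4 / m ^ 2 *
          (⨆ T : {T : Finset (Fin p) // T.card ≤ s + r},
            ∑ j ∈ (T : Finset (Fin p)), (fderiv ℝ l βs (Pi.single j 1)) ^ 2) +
        4 / m * (1 - C) * (l βs - l 0) :=
  parameter_recovery_general p l β hβsupp hβmax f hf s r m hm hconc Sr hSr Sstars hSstars βs hβssupp
    C hC0 happrox
end
end
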